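/- Let v be an odd positive integer and let (X₁,X₂,X₃,X₄) be a Goethals–Seidel difference family in ℤ/vℤ with parameters (v;k₁,k₂,k₃,k₄;λ). Then the 4v×4v Goethals–Seidel array H = [[A₁, A₂R, A₃R, A₄R],[−A₂R, A₁, −RA₄, RA₃],[−A₃R, RA₄, A₁, −RA₂],[−A₄R, −RA₃, RA₂, A₁]], where Aᵢ = A_{Xᵢ}, is a Hadamard matrix of order 4v, i.e. all entries of H are ±1 and H Hᵀ = 4v·I₄ᵥ. -/

import Mathlib

open Finset Matrix Pointwise

/-- Number of ordered pairs `(x, y) ∈ X × X` with `x - y = d`. -/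
def diffCount {v : ℕ} (X : Finset (ZMod v)) (d : ZMod v) : ℕ :=
  ((X ×ˢ X).filter fun p => p.1 - p.2 = d).card

/-- `(X₁, X₂, X₃, X₄)` is a difference family with index `lam`. -/
def IsDiffFamily {v : ℕ} (X₁ X₂ X₃ X₄ : Finset (ZMod v)) (lam : ℕ) : Prop :=
  ∀ d : ZMod v, d ≠ 0 →
    diffCount X₁ d + diffCount X₂ d + diffCount X₃ d + diffCount X₄ d = lam

/-- The `±1` circulant-type matrix associated with `X ⊆ ℤ/vℤ`. -/
def blockA {v : ℕ} (X : Finset (ZMod v)) : Matrix (ZMod v) (ZMod v) ℤ :=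
  fun x y => if y - x ∈ X then -1 else 1

/-- The back-diagonal matrix `R`. -/
def matR (v : ℕ) : Matrix (ZMod v) (ZMod v) ℤ :=
  fun x y => if x + y = 0 then 1 else 0

/-- Index type for a `4v × 4v` matrix built from four `v × v` blocks in each direction. -/
abbrev Idx (v : ℕ) := (ZMod v ⊕ ZMod v) ⊕ (ZMod v ⊕ ZMod v)

/-- The Goethals–Seidel array
`[[A₁, A₂R, A₃R, A₄R], [−A₂R, A₁, −RA₄, RA₃], [−A₃R, RA₄, A₁, −RA₂], [−A₄R, −RA₃, RA₂, A₁]]`. -/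
def gsArray {v : ℕ} [NeZero v] (X₁ X₂ X₃ X₄ : Finset (ZMod v)) : Matrix (Idx v) (Idx v) ℤ :=
  let A₁ := blockA X₁
  let A₂ := blockA X₂
  let A₃ := blockA X₃
  let A₄ := blockA X₄
  let R := matR v
  Matrix.fromBlocks
    (Matrix.fromBlocks A₁ (A₂ * R) (-(A₂ * R)) A₁)
    (Matrix.fromBlocks (A₃ * R) (A₄ * R) (-(R * A₄)) (R * A₃))
    (Matrix.fromBlocks (-(A₃ * R)) (R * A₄) (-(A₄ * R)) (-(R * A₃)))
    (Matrix.fromBlocks A₁ (-(R * A₂)) (R * A₂) A₁)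

namespace GSaux

variable {v : ℕ} [NeZero v]

lemma matR_mul_apply (M : Matrix (ZMod v) (ZMod v) ℤ) (x y : ZMod v) :
    (matR v * M) x y = M (-x) y := by
  rw [Matrix.mul_apply, Finset.sum_eq_single (-x)]
  · simp [matR]
  · intro b _ hb
    have h : x + b ≠ 0 := fun h => hb (eq_neg_of_add_eq_zero_right h)
    simp [matR, h]
  · simp

lemma mul_matR_apply (M : Matrix (ZMod v) (ZMod v) ℤ) (x y : ZMod v) :
    (M * matR v) x y = M x (-y) := by
  rw [Matrix.mul_apply, Finset.sum_eq_single (-y)]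
  · simp [matR]
  · intro b _ hb
    have h : b + y ≠ 0 := fun h => hb (eq_neg_of_add_eq_zero_left h)
    simp [matR, h]
  · simp

lemma matR_mul_matR : (matR v) * matR v = 1 := by
  ext x y
  rw [matR_mul_apply]
  simp [matR, Matrix.one_apply, neg_add_eq_zero]

lemma matR_T : (matR v)ᵀ = matR v := by
  ext x y
  show (if y + x = 0 then (1:ℤ) else 0) = _
  rw [add_comm]
  rfl

lemma blockA_circ (X : Finset (ZMod v)) :
    blockA X = Matrix.circulant (fun d => if -d ∈ X then (-1 : ℤ) else 1) := by
  ext x y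
  simp [blockA, Matrix.circulant, neg_sub]

lemma blockA_T_circ (X : Finset (ZMod v)) :
    (blockA X)ᵀ = Matrix.circulant (fun d => if d ∈ X then (-1 : ℤ) else 1) := by
  ext x y
  simp [blockA, Matrix.circulant]

lemma comm_AA (X Y : Finset (ZMod v)) : blockA X * blockA Y = blockA Y * blockA X := by
  rw [blockA_circ X, blockA_circ Y, Matrix.circulant_mul_comm]

lemma comm_AT (X Y : Finset (ZMod v)) : blockA X * (blockA Y)ᵀ = (blockA Y)ᵀ * blockA X := by
  rw [blockA_circ X, blockA_T_circ Y, Matrix.circulant_mul_comm]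

lemma comm_TT (X Y : Finset (ZMod v)) : (blockA X)ᵀ * (blockA Y)ᵀ = (blockA Y)ᵀ * (blockA X)ᵀ := by
  rw [blockA_T_circ X, blockA_T_circ Y, Matrix.circulant_mul_comm]

lemma commL_AA (X Y : Finset (ZMod v)) (M : Matrix (ZMod v) (ZMod v) ℤ) :
    blockA X * (blockA Y * M) = blockA Y * (blockA X * M) := by
  rw [← mul_assoc, comm_AA, mul_assoc]

lemma commL_AT (X Y : Finset (ZMod v)) (M : Matrix (ZMod v) (ZMod v) ℤ) :
    blockA X * ((blockA Y)ᵀ * M) = (blockA Y)ᵀ * (blockA X * M) := by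
  rw [← mul_assoc, comm_AT, mul_assoc]

lemma commL_TT (X Y : Finset (ZMod v)) (M : Matrix (ZMod v) (ZMod v) ℤ) :
    (blockA X)ᵀ * ((blockA Y)ᵀ * M) = (blockA Y)ᵀ * ((blockA X)ᵀ * M) := by
  rw [← mul_assoc, comm_TT, mul_assoc]

lemma AR_eq (X : Finset (ZMod v)) : blockA X * matR v = matR v * (blockA X)ᵀ := by
  ext x y
  rw [mul_matR_apply, matR_mul_apply]
  show (if -y - x ∈ X then (-1:ℤ) else 1) = blockA X y (-x)
  rw [show (-y - x : ZMod v) = -x - y from by ring]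
  rfl

lemma TR_eq (X : Finset (ZMod v)) : (blockA X)ᵀ * matR v = matR v * blockA X := by
  ext x y
  rw [mul_matR_apply, matR_mul_apply]
  show (if x - -y ∈ X then (-1:ℤ) else 1) = (if y - -x ∈ X then (-1:ℤ) else 1)
  rw [show (x - -y : ZMod v) = y - -x from by ring]

lemma AR_eqL (X : Finset (ZMod v)) (M : Matrix (ZMod v) (ZMod v) ℤ) :
    blockA X * (matR v * M) = matR v * ((blockA X)ᵀ * M) := by
  rw [← mul_assoc, AR_eq, mul_assoc]

lemma TR_eqL (X : Finset (ZMod v)) (M : Matrix (ZMod v) (ZMod v) ℤ) :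
    (blockA X)ᵀ * (matR v * M) = matR v * (blockA X * M) := by
  rw [← mul_assoc, TR_eq, mul_assoc]

lemma RR (M : Matrix (ZMod v) (ZMod v) ℤ) : matR v * (matR v * M) = M := by
  rw [← mul_assoc, matR_mul_matR, one_mul]

lemma card_shift (X : Finset (ZMod v)) (x : ZMod v) :
    (Finset.univ.filter fun z => z - x ∈ X).card = X.card := by
  apply Finset.card_nbij' (fun z => z - x) (fun a => a + x)
  · intro a ha; simpa using ha
  · intro a ha; simp [Finset.mem_coe.mp ha]
  · intro a _; simp
  · intro a _; simp

lemma card_corr (X : Finset (ZMod v)) (x y : ZMod v) :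
    (Finset.univ.filter fun z => z - x ∈ X ∧ z - y ∈ X).card = diffCount X (x - y) := by
  apply Finset.card_nbij' (fun z => (z - y, z - x)) (fun p => p.1 + y)
  · intro z hz
    simp only [Finset.mem_coe, mem_filter, mem_univ, true_and] at hz
    simp only [Finset.mem_coe, Finset.mem_filter, Finset.mem_product]
    exact ⟨⟨hz.2, hz.1⟩, by ring⟩
  · intro p hp
    simp only [Finset.mem_coe, Finset.mem_filter, Finset.mem_product] at hp
    have h2 : p.1 + y - x = p.2 := by linear_combination hp.2
    simp only [Finset.mem_coe, Finset.mem_filter, Finset.mem_univ, true_and]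
    rw [h2]
    refine ⟨hp.1.2, ?_⟩
    simpa using hp.1.1
  · intro z _; simp
  · intro p hp
    simp only [Finset.mem_coe, Finset.mem_filter, Finset.mem_product] at hp
    have h2 : p.1 + y - x = p.2 := by linear_combination hp.2
    simp [h2]

lemma corr (X : Finset (ZMod v)) (x y : ZMod v) :
    (blockA X * (blockA X)ᵀ) x y
      = (v : ℤ) - 4 * X.card + 4 * diffCount X (x - y) := by
  rw [Matrix.mul_apply]
  have hterm : ∀ z : ZMod v, blockA X x z * (blockA X)ᵀ z y
      = 1 - 2 * (if z - x ∈ X then (1:ℤ) else 0) - 2 * (if z - y ∈ X then (1:ℤ) else 0)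
        + 4 * (if z - x ∈ X ∧ z - y ∈ X then (1:ℤ) else 0) := by
    intro z
    show (if z - x ∈ X then (-1:ℤ) else 1) * (if z - y ∈ X then (-1:ℤ) else 1) = _
    by_cases h1 : z - x ∈ X <;> by_cases h2 : z - y ∈ X <;> simp [h1, h2]
  rw [Finset.sum_congr rfl fun z _ => hterm z]
  rw [Finset.sum_add_distrib, Finset.sum_sub_distrib, Finset.sum_sub_distrib,
    ← Finset.mul_sum, ← Finset.mul_sum, ← Finset.mul_sum,
    Finset.sum_boole, Finset.sum_boole, Finset.sum_boole]
  rw [card_shift, card_shift, card_corr]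
  simp [ZMod.card]
  ring

lemma diffCount_zero (X : Finset (ZMod v)) : diffCount X 0 = X.card := by
  unfold diffCount
  apply Finset.card_nbij' (fun p => p.1) (fun a => (a, a))
  · intro p hp
    simp only [Finset.mem_coe, Finset.mem_filter, Finset.mem_product] at hp
    exact hp.1.1
  · intro a ha; simp [Finset.mem_coe.mp ha]
  · intro p hp
    simp only [Finset.mem_coe, Finset.mem_filter, Finset.mem_product] at hp
    have : p.2 = p.1 := by linear_combination -hp.2
    exact Prod.ext rfl this.symm
  · intro a _; rfl

lemma pm_A (X : Finset (ZMod v)) (x y : ZMod v) :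
    blockA X x y = 1 ∨ blockA X x y = -1 := by
  by_cases h : y - x ∈ X <;> simp [blockA, h]

lemma pm_neg {a : ℤ} (h : a = 1 ∨ a = -1) : -a = 1 ∨ -a = -1 := by
  rcases h with h | h <;> simp [h]

end GSaux

open GSaux

/-- The Goethals–Seidel construction: a Goethals–Seidel difference family yields a
Hadamard matrix of order `4v`. -/
theorem gsArray_hadamard (v : ℕ) [NeZero v] (hodd : Odd v) (hpos : 0 < v)
    (X₁ X₂ X₃ X₄ : Finset (ZMod v)) (k₁ k₂ k₃ k₄ lam : ℕ)
    (hc1 : X₁.card = k₁) (hc2 : X₂.card = k₂) (hc3 : X₃.card = k₃) (hc4 : X₄.card = k₄)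
    (hDF : IsDiffFamily X₁ X₂ X₃ X₄ lam)
    (hGS : k₁ + k₂ + k₃ + k₄ = lam + v) :
    (∀ i j, gsArray X₁ X₂ X₃ X₄ i j = 1 ∨ gsArray X₁ X₂ X₃ X₄ i j = -1) ∧
    gsArray X₁ X₂ X₃ X₄ * (gsArray X₁ X₂ X₃ X₄)ᵀ =
      (4 * (v : ℤ)) • (1 : Matrix (Idx v) (Idx v) ℤ) := by
  constructor
  · intro i j
    rcases i with (x|x)|(x|x) <;> rcases j with (y|y)|(y|y) <;>
      simp only [gsArray, Matrix.fromBlocks, Matrix.of_apply, Sum.elim_inl, Sum.elim_inr,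
        Matrix.neg_apply, mul_matR_apply, matR_mul_apply] <;>
      first
        | exact pm_A _ _ _
        | exact pm_neg (pm_A _ _ _)
  · have hkey : blockA X₁ * (blockA X₁)ᵀ + blockA X₂ * (blockA X₂)ᵀ
        + blockA X₃ * (blockA X₃)ᵀ + blockA X₄ * (blockA X₄)ᵀ
        = (4 * (v : ℤ)) • (1 : Matrix (ZMod v) (ZMod v) ℤ) := by
      ext x y
      simp only [Matrix.add_apply, corr, Matrix.smul_apply, Matrix.one_apply, smul_eq_mul]
      by_cases hxy : x = y
      · subst hxy
        simp only [sub_self, diffCount_zero, if_pos rfl, mul_one]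
        push_cast
        ring
      · have hd : x - y ≠ 0 := sub_ne_zero.mpr hxy
        have h := hDF (x - y) hd
        rw [if_neg hxy]
        have hcast : (diffCount X₁ (x-y) : ℤ) + diffCount X₂ (x-y) + diffCount X₃ (x-y)
            + diffCount X₄ (x-y) = lam := by exact_mod_cast h
        have hG : (k₁:ℤ) + k₂ + k₃ + k₄ = lam + v := by exact_mod_cast hGS
        rw [hc1, hc2, hc3, hc4]
        linarith
    have hkey' : (blockA X₁)ᵀ * blockA X₁ + (blockA X₂)ᵀ * blockA X₂
        + (blockA X₃)ᵀ * blockA X₃ + (blockA X₄)ᵀ * blockA X₄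
        = (4 * (v : ℤ)) • (1 : Matrix (ZMod v) (ZMod v) ℤ) := by
      rwa [comm_AT X₁ X₁, comm_AT X₂ X₂, comm_AT X₃ X₃, comm_AT X₄ X₄] at hkey
    simp only [gsArray]
    simp only [Matrix.fromBlocks_transpose, Matrix.fromBlocks_multiply, Matrix.fromBlocks_add]
    have hone : (1 : Matrix (Idx v) (Idx v) ℤ)
        = Matrix.fromBlocks (Matrix.fromBlocks 1 0 0 1) 0 0 (Matrix.fromBlocks 1 0 0 1) := by
      rw [Matrix.fromBlocks_one, Matrix.fromBlocks_one]
    rw [hone]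
    simp only [Matrix.fromBlocks_smul, smul_zero]
    rw [Matrix.fromBlocks_inj]
    refine ⟨?_, ?_, ?_, ?_⟩ <;>
      (try rw [show (0 : Matrix (ZMod v ⊕ ZMod v) (ZMod v ⊕ ZMod v) ℤ)
            = Matrix.fromBlocks 0 0 0 0 from Matrix.fromBlocks_zero.symm]) <;>
      rw [Matrix.fromBlocks_inj] <;> refine ⟨?_, ?_, ?_, ?_⟩ <;>
      simp only [Matrix.transpose_neg, Matrix.transpose_mul, Matrix.transpose_transpose, matR_T,
        mul_neg, neg_mul, neg_neg, Matrix.mul_assoc, AR_eq, TR_eq, AR_eqL, TR_eqL, RR,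
        matR_mul_matR, one_mul, mul_one, commL_AA, commL_AT, commL_TT, comm_AA, comm_AT,
        comm_TT] <;>
      try abel
    all_goals (refine Eq.trans ?_ hkey'; abel)
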